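/- Let ρ be a density matrix on ℂ^d with spectral decomposition ρ = Σ_{x ∈ Fin d} p_x |x⟩⟨x| for an orthonormal eigenbasis {|x⟩}, and let S(ρ) = −Σ_x p_x log₂ p_x be its von Neumann entropy. For every ε > 0 and δ > 0 there exists N₀ ∈ ℕ such that for every N ≥ N₀ the typical projector satisfies Tr[ P_{N,ε} ρ^{⊗N} ] ≥ 1 − δ, where ρ^{⊗N} is the N-fold Kronecker (tensor) power of ρ. -/

import Mathlib

/-!
In the eigenbasis of `ρ` the tensor power `ρ^{⊗N}` is diagonal in the product basis, so
`Tr[P_{N,ε} ρ^{⊗N}]` is the weight `∑_{x⃗ ∈ T} ∏ₖ p_{x_k}` of the typical set under the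
i.i.d. distribution `p^N`. A sequence of positive weight is typical as soon as its information
content `∑ₖ -log₂ p_{x_k}` is within `Nε` of its mean `N S`. That content is a sum of `N`
independent centred variables, of variance `N V` with `V = ∑ₓ pₓ (-log₂ pₓ - S)²`, so by
Chebyshev the atypical weight is at most `V / (N ε²) → 0`.
-/

open Matrix
open scoped ComplexOrder

noncomputable section

/-- `N`-fold tensor (Kronecker) power of a matrix. -/
def tpow {d : Type*} (ρ : Matrix d d ℂ) (N : ℕ) : Matrix (Fin N → d) (Fin N → d) ℂ :=
  Matrix.of fun a b => ∏ k, ρ (a k) (b k)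

/-- The `ε`-typical set of length-`N` sequences for eigenvalues `p` and entropy `S`:
sequences with `2^{−N(S+ε)} ≤ Π_k p_{x_k} ≤ 2^{−N(S−ε)}`. -/
def typicalSet {ι : Type*} [Fintype ι] (p : ι → ℝ) (S : ℝ) (N : ℕ) (ε : ℝ) :
    Finset (Fin N → ι) :=
  Finset.univ.filter fun xs =>
    (2 : ℝ) ^ (-(N : ℝ) * (S + ε)) ≤ ∏ k, p (xs k) ∧
      ∏ k, p (xs k) ≤ (2 : ℝ) ^ (-(N : ℝ) * (S - ε))

/-- The typical projector `Σ_{x⃗ ∈ T} |x₁⟩⟨x₁| ⊗ ⋯ ⊗ |x_N⟩⟨x_N|` built from eigenvectors `v`. -/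
def typProj {ι d : Type*} {N : ℕ} (v : ι → (d → ℂ)) (T : Finset (Fin N → ι)) :
    Matrix (Fin N → d) (Fin N → d) ℂ :=
  ∑ xs ∈ T, Matrix.of fun a b => ∏ k, v (xs k) (a k) * star (v (xs k) (b k))

section ProductWeights

variable {ι R : Type*} [Fintype ι] [CommSemiring R] {N : ℕ}

theorem sum_prod_mul_prod_eq_prod_sum (p : ι → R) (f : Fin N → ι → R) :
    ∑ xs : Fin N → ι, (∏ k, p (xs k)) * ∏ k, f k (xs k) = ∏ k, ∑ x, p x * f k x := by
  simp only [Fintype.prod_sum, ← Finset.prod_mul_distrib]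

variable {p : ι → R}

theorem sum_prod_eq_one (hsum : ∑ x, p x = 1) : ∑ xs : Fin N → ι, ∏ k, p (xs k) = 1 := by
  simpa [hsum] using sum_prod_mul_prod_eq_prod_sum (N := N) p fun _ _ => 1

theorem sum_prod_mul_apply_mul_apply (hsum : ∑ x, p x = 1) {g : ι → R}
    (hmean : ∑ x, p x * g x = 0) (k l : Fin N) :
    ∑ xs : Fin N → ι, (∏ m, p (xs m)) * (g (xs k) * g (xs l)) =
      if k = l then ∑ x, p x * g x ^ 2 else 0 := by
  have hsplit : ∀ xs : Fin N → ι, g (xs k) * g (xs l) =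
      ∏ m, (if m = k then g (xs m) else 1) * (if m = l then g (xs m) else 1) := by
    intro xs
    rw [Finset.prod_mul_distrib, Finset.prod_ite_eq', Finset.prod_ite_eq']
    simp
  simp_rw [hsplit]
  rw [sum_prod_mul_prod_eq_prod_sum p fun m x =>
    (if m = k then g x else 1) * (if m = l then g x else 1)]
  split_ifs with hkl
  · subst hkl
    rw [Finset.prod_eq_single_of_mem k (Finset.mem_univ k) fun m _ hm => by simp [hm, hsum]]
    simp [sq]
  · refine Finset.prod_eq_zero (Finset.mem_univ k) ?_
    simpa [hkl] using hmean

theorem sum_prod_mul_sum_sq (hsum : ∑ x, p x = 1) {g : ι → R} (hmean : ∑ x, p x * g x = 0) :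
    ∑ xs : Fin N → ι, (∏ m, p (xs m)) * (∑ k, g (xs k)) ^ 2 = N * ∑ x, p x * g x ^ 2 := by
  simp_rw [sq (∑ k, _), Finset.sum_mul_sum, Finset.mul_sum]
  rw [Finset.sum_comm]
  simp_rw [fun k => Finset.sum_comm (s := Finset.univ (α := Fin N → ι)) (t := Finset.univ)
    (f := fun xs l => (∏ m, p (xs m)) * (g (xs k) * g (xs l))),
    sum_prod_mul_apply_mul_apply hsum hmean]
  simp [Finset.mul_sum]

end ProductWeights

theorem sq_mul_sum_filter_le_sum_mul_sq {α : Type*} (s : Finset α) {w : α → ℝ}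
    (hw : ∀ x ∈ s, 0 ≤ w x) (f : α → ℝ) {t : ℝ} (ht : 0 ≤ t) :
    t ^ 2 * ∑ x ∈ s with t ≤ |f x|, w x ≤ ∑ x ∈ s, w x * f x ^ 2 :=
  calc t ^ 2 * ∑ x ∈ s with t ≤ |f x|, w x = ∑ x ∈ s with t ≤ |f x|, w x * t ^ 2 := by
        rw [Finset.mul_sum]; simp only [mul_comm]
    _ ≤ ∑ x ∈ s with t ≤ |f x|, w x * f x ^ 2 := Finset.sum_le_sum fun x hx => by
        rw [Finset.mem_filter] at hx
        rw [← sq_abs (f x)]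
        exact mul_le_mul_of_nonneg_left (pow_le_pow_left₀ ht hx.2 2) (hw x hx.1)
    _ ≤ ∑ x ∈ s, w x * f x ^ 2 := Finset.sum_le_sum_of_subset_of_nonneg (Finset.filter_subset _ _)
        fun x hx _ => mul_nonneg (hw x hx) (sq_nonneg _)

section Typical

variable {ι : Type*} [Fintype ι] {p : ι → ℝ} {S ε : ℝ}

theorem mem_typicalSet_of_abs_sum_le {N : ℕ} {xs : Fin N → ι} (hpos : ∀ k, 0 < p (xs k))
    (h : |∑ k, (-Real.logb 2 (p (xs k)) - S)| ≤ N * ε) : xs ∈ typicalSet p S N ε := by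
  have hprod : ∏ k, p (xs k) = 2 ^ ∑ k, Real.logb 2 (p (xs k)) := by
    rw [← Real.logb_prod _ _ fun k _ => (hpos k).ne',
      Real.rpow_logb two_pos (by norm_num) (Finset.prod_pos fun k _ => hpos k)]
  have hsum : ∑ k, (-Real.logb 2 (p (xs k)) - S) = -∑ k, Real.logb 2 (p (xs k)) - N * S := by
    simp [Finset.sum_sub_distrib]
  rw [abs_le, hsum] at h
  simp only [typicalSet, Finset.mem_filter, Finset.mem_univ, true_and, hprod]
  constructor <;> apply Real.rpow_le_rpow_of_exponent_le one_le_two <;> linarith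

variable [DecidableEq ι] (hp : ∀ x, 0 ≤ p x) (hsum : ∑ x, p x = 1)
  (hS : S = -∑ x, p x * Real.logb 2 (p x))
include hp hsum hS

theorem sq_mul_sum_compl_typicalSet_le (hε : 0 ≤ ε) (N : ℕ) :
    (N * ε) ^ 2 * ∑ xs ∈ (typicalSet p S N ε)ᶜ, ∏ k, p (xs k) ≤
      N * ∑ x, p x * (-Real.logb 2 (p x) - S) ^ 2 := by
  set g : ι → ℝ := fun x => -Real.logb 2 (p x) - S
  have hmean : ∑ x, p x * g x = 0 := by
    simp only [g, mul_sub, mul_neg, Finset.sum_sub_distrib, Finset.sum_neg_distrib,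
      ← Finset.sum_mul, hsum, hS]
    ring
  have hw : ∀ xs : Fin N → ι, 0 ≤ ∏ k, p (xs k) := fun xs => Finset.prod_nonneg fun k _ => hp _
  have hcompl : ∑ xs ∈ (typicalSet p S N ε)ᶜ, ∏ k, p (xs k) ≤
      ∑ xs : Fin N → ι with N * ε ≤ |∑ k, g (xs k)|, ∏ k, p (xs k) := by
    -- atypical sequences of weight zero need not be far from the mean, but they weigh nothing
    rw [← Finset.sum_filter_of_ne (p := fun xs => N * ε ≤ |∑ k, g (xs k)|)]
    · exact Finset.sum_le_sum_of_subset_of_nonneg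
        (Finset.filter_subset_filter _ (Finset.subset_univ _)) fun xs _ _ => hw xs
    · intro xs hxs hne
      have hpos : ∀ k, 0 < p (xs k) := fun k =>
        (hp _).lt_of_ne fun h => hne (Finset.prod_eq_zero (Finset.mem_univ k) h.symm)
      by_contra hlt
      exact Finset.mem_compl.mp hxs (mem_typicalSet_of_abs_sum_le hpos (not_le.mp hlt).le)
  calc (N * ε) ^ 2 * ∑ xs ∈ (typicalSet p S N ε)ᶜ, ∏ k, p (xs k)
      ≤ (N * ε) ^ 2 * ∑ xs : Fin N → ι with N * ε ≤ |∑ k, g (xs k)|, ∏ k, p (xs k) := by gcongr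
    _ ≤ ∑ xs : Fin N → ι, (∏ k, p (xs k)) * (∑ k, g (xs k)) ^ 2 :=
        sq_mul_sum_filter_le_sum_mul_sq _ (fun xs _ => hw xs) _ (by positivity)
    _ = N * ∑ x, p x * g x ^ 2 := sum_prod_mul_sum_sq hsum hmean

theorem eventually_one_sub_le_sum_typicalSet (hε : 0 < ε) {δ : ℝ} (hδ : 0 < δ) :
    ∀ᶠ N in Filter.atTop, 1 - δ ≤ ∑ xs ∈ typicalSet p S N ε, ∏ k, p (xs k) := by
  set V := ∑ x, p x * (-Real.logb 2 (p x) - S) ^ 2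
  filter_upwards [Filter.eventually_gt_atTop 0,
    (tendsto_const_div_atTop_nhds_zero_nat (V / ε ^ 2)).eventually (ge_mem_nhds hδ)]
    with N hN hVN
  have hNε : 0 < (N * ε) ^ 2 := by positivity
  have hcompl : ∑ xs ∈ (typicalSet p S N ε)ᶜ, ∏ k, p (xs k) ≤ V / ε ^ 2 / N := by
    calc _ ≤ N * V / (N * ε) ^ 2 :=
          (le_div_iff₀ hNε).mpr (by linarith [sq_mul_sum_compl_typicalSet_le hp hsum hS hε.le N])
      _ = V / ε ^ 2 / N := by field_simp
  linarith [Finset.sum_add_sum_compl (typicalSet p S N ε) fun xs => ∏ k, p (xs k),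
    sum_prod_eq_one (N := N) hsum]

end Typical

section Spectral

variable {ι n R : Type*} [Fintype ι] [DecidableEq ι] [Fintype n] [CommSemiring R] [StarRing R]
  {v : ι → n → R} (honb : ∀ x y, star (v x) ⬝ᵥ v y = if x = y then 1 else 0) (p : ι → R)
include honb

theorem sum_smul_vecMulVec_mulVec (x : ι) :
    (∑ y, p y • vecMulVec (v y) (star (v y))) *ᵥ v x = p x • v x := by
  simp [Matrix.sum_mulVec, Matrix.smul_mulVec, vecMulVec_mulVec, honb]

theorem dotProduct_sum_smul_vecMulVec_mulVec (x : ι) :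
    star (v x) ⬝ᵥ (∑ y, p y • vecMulVec (v y) (star (v y))) *ᵥ v x = p x := by
  simp [sum_smul_vecMulVec_mulVec honb, honb]

theorem trace_sum_smul_vecMulVec :
    (∑ y, p y • vecMulVec (v y) (star (v y))).trace = ∑ y, p y := by
  simp [trace_sum, dotProduct_comm (v _), honb]

end Spectral

theorem trace_vecMulVec_mul {n R : Type*} [Fintype n] [CommSemiring R] (u w : n → R)
    (M : Matrix n n R) : (vecMulVec u w * M).trace = w ⬝ᵥ M *ᵥ u := by
  rw [vecMulVec_mul, trace_vecMulVec, dotProduct_comm, dotProduct_mulVec]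

theorem trace_of_prod_mul_of_prod {κ n R : Type*} [Fintype κ] [DecidableEq κ] [Fintype n]
    [CommSemiring R] (A B : κ → Matrix n n R) :
    (of (fun a b : κ → n => ∏ k, A k (a k) (b k)) *
        of fun a b : κ → n => ∏ k, B k (a k) (b k)).trace = ∏ k, (A k * B k).trace := by
  simp only [trace, diag, mul_apply, of_apply, Fintype.prod_sum, ← Finset.prod_mul_distrib]

theorem trace_typProj_mul_tpow {ι n : Type*} [Fintype n] {N : ℕ} (v : ι → n → ℂ)
    (ρ : Matrix n n ℂ) (T : Finset (Fin N → ι)) :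
    (typProj v T * tpow ρ N).trace = ∑ xs ∈ T, ∏ k, star (v (xs k)) ⬝ᵥ ρ *ᵥ v (xs k) := by
  rw [typProj, Finset.sum_mul, trace_sum]
  refine Finset.sum_congr rfl fun xs _ => ?_
  exact (trace_of_prod_mul_of_prod (fun k => vecMulVec (v (xs k)) (star (v (xs k))))
    fun _ => ρ).trans (by simp only [trace_vecMulVec_mul])

theorem typical_subspace_high_probability (d : ℕ)
    (ρ : Matrix (Fin d) (Fin d) ℂ) (hρ : ρ.PosSemidef) (htr : ρ.trace = 1)
    (p : Fin d → ℝ) (v : Fin d → (Fin d → ℂ))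
    (honb : ∀ x y, star (v x) ⬝ᵥ v y = if x = y then 1 else 0)
    (hspec : ρ = ∑ x, (p x : ℂ) • Matrix.vecMulVec (v x) (star (v x)))
    (S : ℝ) (hS : S = -∑ x, p x * Real.logb 2 (p x))
    (ε δ : ℝ) (hε : 0 < ε) (hδ : 0 < δ) :
    ∃ N₀ : ℕ, ∀ N ≥ N₀,
      1 - δ ≤ ((typProj v (typicalSet p S N ε) * tpow ρ N).trace).re := by
  have hpv := dotProduct_sum_smul_vecMulVec_mulVec honb fun x => (p x : ℂ)
  rw [← hspec] at hpv
  have hp : ∀ x, 0 ≤ p x := fun x => by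
    simpa [hpv] using hρ.dotProduct_mulVec_nonneg (v x)
  have hsum : ∑ x, p x = 1 := by
    exact_mod_cast (trace_sum_smul_vecMulVec honb _).symm.trans (hspec ▸ htr)
  obtain ⟨N₀, hN₀⟩ :=
    Filter.eventually_atTop.mp (eventually_one_sub_le_sum_typicalSet hp hsum hS hε hδ)
  refine ⟨N₀, fun N hN => ?_⟩
  simp_rw [trace_typProj_mul_tpow, hpv, ← Complex.ofReal_prod, ← Complex.ofReal_sum,
    Complex.ofReal_re]
  exact hN₀ N hN
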